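/- Fix σ, γ > 0, μ_A ∈ ℝ, θ ∈ ℝ, and let d = |μ_A − θ|. For σ_A > 0 define the optimal utility loss V(σ_A) = min( d², inf_{σ_U ∈ (0,∞)} [ σ_U²(σ_A⁴ + σ_U²·d²)/(σ_A² + σ_U²)² + (γ/2)·ln((σ² + σ_U²)/σ_U²) ] ). Then: (i) if 0 < σ_{A1} < σ_{A2} ≤ d, then V(σ_{A2}) ≤ V(σ_{A1}), and the inequality is strict whenever the infimum defining V(σ_{A1}) is attained at some σ_U ∈ (0, ∞) with value at most d²; (ii) if d ≤ σ_{A1} < σ_{A2}, then V(σ_{A1}) ≤ V(σ_{A2}). That is, censoring (small σ_A) benefits users with common preferences and hurts users with unique preferences. -/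

import Mathlib

/-!
The communication cost does not depend on `σ_A`, and in the variables `s = σ_A²`, `u = σ_U²`
the fidelity error `u (s² + u d²) / (s + u)²` has `s`-derivative `2u² (s − d²) / (s + u)³`.
So for every fixed `σ_U` the loss strictly decreases in `σ_A` on `(0, d]` and increases on
`[d, ∞)`; this pointwise comparison passes to the infimum over `σ_U` and to the minimum with
`d²`. For strictness, evaluate the loss at `σ_A2` at a minimiser for `σ_A1`.
-/

open Set

/-- The fidelity error with `D = d²`, `s = σ_A²` and `u = σ_U²`. -/
noncomputable def fidelityError (D s u : ℝ) : ℝ :=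
  u * (s ^ 2 + u * D) / (s + u) ^ 2

lemma fidelityError_sub_fidelityError (D u : ℝ) {s t : ℝ} (hs : s + u ≠ 0) (ht : t + u ≠ 0) :
    fidelityError D s u - fidelityError D t u =
      u ^ 2 * (t - s) * ((D - s) * (t + u) + (D - t) * (s + u)) / ((s + u) ^ 2 * (t + u) ^ 2) := by
  unfold fidelityError
  field_simp
  ring

lemma fidelityError_strictAntiOn (D : ℝ) {u : ℝ} (hu : 0 < u) :
    StrictAntiOn (fidelityError D · u) (Icc 0 D) := by
  intro s ⟨hs0, hsD⟩ t ⟨ht0, htD⟩ hst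
  have hsu := add_pos_of_nonneg_of_pos hs0 hu
  have htu := add_pos_of_nonneg_of_pos ht0 hu
  rw [← sub_pos, fidelityError_sub_fidelityError D u hsu.ne' htu.ne']
  have : 0 < (D - s) * (t + u) + (D - t) * (s + u) := by
    nlinarith [mul_pos (sub_pos.2 (hst.trans_le htD)) hsu]
  exact div_pos (mul_pos (mul_pos (pow_pos hu 2) (sub_pos.2 hst)) this) (by positivity)

lemma fidelityError_strictMonoOn {D u : ℝ} (hD : 0 ≤ D) (hu : 0 < u) :
    StrictMonoOn (fidelityError D · u) (Ici D) := by
  intro s (hs : D ≤ s) t (ht : D ≤ t) hst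
  have hsu := add_pos_of_nonneg_of_pos (hD.trans hs) hu
  have htu := add_pos_of_nonneg_of_pos (hD.trans ht) hu
  rw [← sub_neg, fidelityError_sub_fidelityError D u hsu.ne' htu.ne']
  have : (D - s) * (t + u) + (D - t) * (s + u) < 0 := by
    nlinarith [mul_pos (sub_pos.2 (hs.trans_lt hst)) htu]
  exact div_neg_of_neg_of_pos
    (mul_neg_of_pos_of_neg (mul_pos (pow_pos hu 2) (sub_pos.2 hst)) this) (by positivity)

lemma log_div_sq_nonneg (σ : ℝ) {x : ℝ} (hx : x ≠ 0) : 0 ≤ Real.log ((σ ^ 2 + x ^ 2) / x ^ 2) :=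
  Real.log_nonneg <| (le_div_iff₀ (by positivity)).2 (by nlinarith [sq_nonneg σ])

lemma min_ciInf_lt_min_ciInf {ι α : Type*} [ConditionallyCompleteLinearOrder α] {f g : ι → α}
    {c : α} (hf : BddBelow (range f)) {i : ι} (hi : g i = ⨅ j, g j) (hc : g i ≤ c)
    (hfg : f i < g i) : min c (⨅ j, f j) < min c (⨅ j, g j) :=
  calc min c (⨅ j, f j) ≤ f i := (min_le_right _ _).trans (ciInf_le hf i)
    _ < g i := hfg
    _ = min c (⨅ j, g j) := by rw [← hi, min_eq_right hc]

theorem censoring_bias_utility_general (σ γ μA θ : ℝ) (hγ : 0 < γ)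
    (L : ℝ → ℝ → ℝ)
    (hL : ∀ σA σU, L σA σU =
      σU ^ 2 * (σA ^ 4 + σU ^ 2 * (μA - θ) ^ 2) / (σA ^ 2 + σU ^ 2) ^ 2
        + γ / 2 * Real.log ((σ ^ 2 + σU ^ 2) / σU ^ 2))
    (V : ℝ → ℝ)
    (hV : ∀ σA, V σA = min ((μA - θ) ^ 2) (⨅ σU : Set.Ioi (0 : ℝ), L σA σU)) :
    (∀ σA1 σA2 : ℝ, 0 < σA1 → σA1 < σA2 → σA2 ≤ |μA - θ| →
      V σA2 ≤ V σA1 ∧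
      ((∃ σU : ℝ, 0 < σU ∧ L σA1 σU = (⨅ σU' : Set.Ioi (0 : ℝ), L σA1 σU') ∧
          L σA1 σU ≤ (μA - θ) ^ 2) →
        V σA2 < V σA1)) ∧
    (∀ σA1 σA2 : ℝ, |μA - θ| ≤ σA1 → σA1 < σA2 → V σA1 ≤ V σA2) := by
  have hLf : ∀ σA σU, L σA σU = fidelityError ((μA - θ) ^ 2) (σA ^ 2) (σU ^ 2)
      + γ / 2 * Real.log ((σ ^ 2 + σU ^ 2) / σU ^ 2) := fun σA σU => by
    rw [hL, fidelityError]; ring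
  have hbdd (σA : ℝ) : BddBelow (range fun σU : Ioi (0 : ℝ) => L σA σU) :=
    ⟨0, by
      rintro _ ⟨⟨σU, hσU⟩, rfl⟩
      show 0 ≤ L σA σU
      rw [hL]
      have := log_div_sq_nonneg σ hσU.out.ne'
      positivity⟩
  refine ⟨fun σA1 σA2 h1 h12 h2 => ?_, fun σA1 σA2 h1 h12 => ?_⟩
  · have hsq : σA1 ^ 2 < σA2 ^ 2 := pow_lt_pow_left₀ h12 h1.le two_ne_zero
    have hsqd : σA2 ^ 2 ≤ (μA - θ) ^ 2 := sq_abs (μA - θ) ▸ pow_le_pow_left₀ (by linarith) h2 2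
    have hlt (σU : ℝ) (hσU : 0 < σU) : L σA2 σU < L σA1 σU := by
      rw [hLf, hLf, add_lt_add_iff_right]
      exact fidelityError_strictAntiOn _ (by positivity)
        ⟨by positivity, hsq.le.trans hsqd⟩ ⟨by positivity, hsqd⟩ hsq
    refine ⟨?_, fun ⟨σU, hσU, hmin, hle⟩ => ?_⟩
    · rw [hV, hV]
      exact min_le_min_left _ (ciInf_mono (hbdd σA2) fun σU => (hlt σU σU.2).le)
    · rw [hV, hV]
      exact min_ciInf_lt_min_ciInf (i := ⟨σU, hσU⟩) (hbdd σA2) hmin hle (hlt σU hσU)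
  · have hdsq : (μA - θ) ^ 2 ≤ σA1 ^ 2 := sq_abs (μA - θ) ▸ pow_le_pow_left₀ (abs_nonneg _) h1 2
    have hsq : σA1 ^ 2 < σA2 ^ 2 := pow_lt_pow_left₀ h12 ((abs_nonneg _).trans h1) two_ne_zero
    have hle (σU : Ioi (0 : ℝ)) : L σA1 σU ≤ L σA2 σU := by
      rw [hLf, hLf, add_le_add_iff_right]
      exact (fidelityError_strictMonoOn (sq_nonneg _) (pow_pos σU.2 2)).monotoneOn
        (mem_Ici.2 hdsq) (mem_Ici.2 (hdsq.trans hsq.le)) hsq.le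
    rw [hV, hV]
    exact min_le_min_left _ (ciInf_mono (hbdd σA1) hle)

/-- Censoring bias and user utility. Let `d = |μA − θ|` and let `V(σA)` be the
optimal utility loss of user `θ` facing an AI with prior standard deviation
`σA`. (i) On `0 < σA1 < σA2 ≤ d`, `V` is nonincreasing in censoring:
`V(σA2) ≤ V(σA1)`, strictly whenever the infimum defining `V(σA1)` is attained
at some `σU ∈ (0, ∞)` with value at most `d²`. (ii) On `d ≤ σA1 < σA2`,
`V(σA1) ≤ V(σA2)`. -/
theorem censoring_bias_utility (σ γ μA θ : ℝ) (hσ : 0 < σ) (hγ : 0 < γ)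
    (L : ℝ → ℝ → ℝ)
    (hL : ∀ σA σU, L σA σU =
      σU ^ 2 * (σA ^ 4 + σU ^ 2 * (μA - θ) ^ 2) / (σA ^ 2 + σU ^ 2) ^ 2
        + γ / 2 * Real.log ((σ ^ 2 + σU ^ 2) / σU ^ 2))
    (V : ℝ → ℝ)
    (hV : ∀ σA, V σA = min ((μA - θ) ^ 2) (⨅ σU : Set.Ioi (0 : ℝ), L σA σU)) :
    (∀ σA1 σA2 : ℝ, 0 < σA1 → σA1 < σA2 → σA2 ≤ |μA - θ| →
      V σA2 ≤ V σA1 ∧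
      ((∃ σU : ℝ, 0 < σU ∧ L σA1 σU = (⨅ σU' : Set.Ioi (0 : ℝ), L σA1 σU') ∧
          L σA1 σU ≤ (μA - θ) ^ 2) →
        V σA2 < V σA1)) ∧
    (∀ σA1 σA2 : ℝ, |μA - θ| ≤ σA1 → σA1 < σA2 → V σA1 ≤ V σA2) :=
  censoring_bias_utility_general σ γ μA θ hγ L hL V hV
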